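/- arXiv:math/0309322 — 2 statements merged into one kernel-verified Lean document; each statement's English description precedes it below -/
import Mathlib

section
/- The Briançon polynomial f = 3y·p³ + 3p²·s − 5p·s − s, where s = xy + 1 and p = x·s + 1, viewed as a polynomial in ℂ[x,y], has no critical points: the system ∂f/∂x = ∂f/∂y = 0 has no solution in ℂ². -/
/-!
Write `s = xy + 1` and `p = xs + 1`. Three polynomial identities carry the argument:
`36 p² (4p - 1)` is a combination of `∂f/∂x` and `∂f/∂y`, while `12` is a combination of
`∂f/∂y` and `p`, and `3` one of `∂f/∂y` and `4p - 1`. At a common zero of the partials,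
therefore, `p = 0` or `4p = 1`, and these force `12 = 0` and `3 = 0` respectively.
-/

open MvPolynomial

theorem Derivation.map_ofNat {R A M : Type*} [CommSemiring R] [CommSemiring A] [AddCommMonoid M]
    [Algebra R A] [Module A M] [Module R M] (D : Derivation R A M) (n : ℕ) [n.AtLeastTwo] :
    D (ofNat(n) : A) = 0 := by
  rw [← Nat.cast_ofNat]
  exact D.map_natCast n

namespace Briancon

section CommRing

variable {A : Type*} [CommRing A] (x y : A)

def s : A := x * y + 1

def p : A := x * s x y + 1

def f : A := 3 * y * p x y ^ 3 + 3 * p x y ^ 2 * s x y - 5 * p x y * s x y - s x y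

def dfdx : A :=
  6 * y * p x y ^ 2 * (3 * s x y - 1) + s x y * (2 * s x y - 1) * (6 * p x y - 5)
    - 5 * p x y * y - y

def dfdy : A := 3 * p x y ^ 3 + x * (9 * p x y ^ 2 * s x y - 16 * p x y + 4)

theorem map_dfdx {B : Type*} [CommRing B] (φ : A →+* B) : φ (dfdx x y) = dfdx (φ x) (φ y) := by
  simp [dfdx, p, s, map_ofNat]

theorem map_dfdy {B : Type*} [CommRing B] (φ : A →+* B) : φ (dfdy x y) = dfdy (φ x) (φ y) := by
  simp [dfdy, p, s, map_ofNat]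

theorem twelve_eq_combination_dfdy_p : (12 : A) =
    -(12 * s x y * p x y ^ 2 + 3 * s x y * p x y + 3 * s x y - 16 * p x y) * dfdy x y
      + (3 * p x y ^ 2 + 9 * x * p x y * s x y - 16 * x)
        * (12 * s x y * p x y ^ 2 + 3 * s x y * p x y + 3 * s x y - 16 * p x y + 4) * p x y := by
  simp only [dfdy, p, s]
  ring

theorem three_eq_combination_dfdy_four_p_sub_one : (3 : A) = -8 * dfdy x y
    + (24 * x ^ 4 * y ^ 2 + 48 * x ^ 3 * y + 36 * x ^ 2 * y + 24 * x ^ 2 + 4 * x + 9)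
      * (4 * p x y - 1) := by
  simp only [dfdy, p, s]
  ring

theorem p_sq_mul_four_p_sub_one_eq_combination_dfdx_dfdy :
    36 * p x y ^ 2 * (4 * p x y - 1) =
      x * (12 * p x y ^ 3 - 9 * p x y ^ 2) ^ 2 * dfdx x y
        - s x y * (216 * s x y * p x y ^ 5 - 162 * s x y * p x y ^ 4 - 144 * p x y ^ 5
            + 72 * p x y ^ 4 - 9 * p x y ^ 3 - 9 * p x y ^ 2) * dfdy x y := by
  simp only [dfdx, dfdy, p, s]
  ring

end CommRing

variable {R : Type*} [CommRing R]

theorem pderiv_zero_f :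
    pderiv 0 (f (X 0) (X 1) : MvPolynomial (Fin 2) R) = dfdx (X 0) (X 1) := by
  simp only [f, dfdx, p, s, map_sub, map_add, Derivation.leibniz, Derivation.leibniz_pow,
    Derivation.map_ofNat, pderiv_X_self, pderiv_X_of_ne one_ne_zero, Derivation.map_one_eq_zero,
    smul_eq_mul]
  ring

theorem pderiv_one_f :
    pderiv 1 (f (X 0) (X 1) : MvPolynomial (Fin 2) R) = dfdy (X 0) (X 1) := by
  simp only [f, dfdy, p, s, map_sub, map_add, Derivation.leibniz, Derivation.leibniz_pow,
    Derivation.map_ofNat, pderiv_X_self, pderiv_X_of_ne zero_ne_one, Derivation.map_one_eq_zero,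
    smul_eq_mul]
  ring

theorem not_dfdx_eq_zero_and_dfdy_eq_zero [NoZeroDivisors R] (h2 : (2 : R) ≠ 0)
    (h3 : (3 : R) ≠ 0) (x y : R) : ¬ (dfdx x y = 0 ∧ dfdy x y = 0) := by
  rintro ⟨hx, hy⟩
  have h12 : (12 : R) ≠ 0 := by
    simpa only [show (12 : R) = 2 * 2 * 3 by norm_num] using mul_ne_zero (mul_ne_zero h2 h2) h3
  have h36 : (36 : R) ≠ 0 := by
    simpa only [show (36 : R) = 12 * 3 by norm_num] using mul_ne_zero h12 h3
  have hp : p x y = 0 ∨ 4 * p x y - 1 = 0 := by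
    simpa [mul_assoc, hx, hy, h36] using p_sq_mul_four_p_sub_one_eq_combination_dfdx_dfdy x y
  rcases hp with hp | hp
  · exact h12 (by simpa [hy, hp] using twelve_eq_combination_dfdy_p x y)
  · exact h3 (by simpa [hy, hp] using three_eq_combination_dfdy_four_p_sub_one x y)

end Briancon

open Briancon

/-- The Briançon polynomial `f = 3y·p³ + 3p²·s − 5p·s − s`, where `s = xy + 1`
and `p = x·s + 1`, has no critical points in `ℂ²`. -/
theorem briancon_no_critical_points :
    ¬ ∃ v : Fin 2 → ℂ,
      (∀ i : Fin 2,
        eval v (pderiv i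
          (3 * X 1 * (X 0 * (X 0 * X 1 + 1) + 1) ^ 3
            + 3 * (X 0 * (X 0 * X 1 + 1) + 1) ^ 2 * (X 0 * X 1 + 1)
            - 5 * (X 0 * (X 0 * X 1 + 1) + 1) * (X 0 * X 1 + 1)
            - (X 0 * X 1 + 1) : MvPolynomial (Fin 2) ℂ)) = 0) := by
  rintro ⟨v, hv⟩
  have hx : eval v (dfdx (X 0) (X 1)) = 0 := pderiv_zero_f (R := ℂ) ▸ hv 0
  have hy : eval v (dfdy (X 0) (X 1)) = 0 := pderiv_one_f (R := ℂ) ▸ hv 1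
  rw [map_dfdx, eval_X, eval_X] at hx
  rw [map_dfdy, eval_X, eval_X] at hy
  exact not_dfdx_eq_zero_and_dfdy_eq_zero two_ne_zero three_ne_zero (v 0) (v 1) ⟨hx, hy⟩
end

section
/- For the family f_s(x,y) = (x − s² − 1)(x²y + 1) with s² + 1 ≠ 0, the set of solutions of ∂f_s/∂x = ∂f_s/∂y = 0 in ℂ² consists of exactly one point, the affine Milnor number dim_ℂ ℂ[x,y]/(∂f_s/∂x, ∂f_s/∂y) equals 1, and the unique affine critical value is 0. -/
open MvPolynomial

private lemma sub_C_eval_mem (v : Fin 2 → ℂ) (p : MvPolynomial (Fin 2) ℂ) :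
    p - C (eval v p) ∈ Ideal.span {X 0 - C (v 0), X 1 - C (v 1)} := by
  induction p using MvPolynomial.induction_on with
  | C a => simp
  | add p q hp hq =>
      have h := Ideal.add_mem _ hp hq
      convert h using 1
      simp only [map_add, C_add]
      ring
  | mul_X p i hp =>
      have hXi : (X i - C (v i) : MvPolynomial (Fin 2) ℂ) ∈
          Ideal.span {X 0 - C (v 0), X 1 - C (v 1)} := by
        fin_cases i
        · exact Ideal.subset_span (by simp)
        · exact Ideal.subset_span (by simp)
      have h := Ideal.add_mem _ (Ideal.mul_mem_right (X i) _ hp)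
        (Ideal.mul_mem_left _ (C (eval v p)) hXi)
      convert h using 1
      simp only [eval_mul, eval_X, C_mul]
      ring

/-- For `s ∈ ℂ` with `s² + 1 ≠ 0`, the polynomial
`f_s(x,y) = (x − s² − 1)(x²y + 1)` has exactly one critical point in `ℂ²`, its
affine Milnor number `dim_ℂ ℂ[x,y]/Jac(f_s)` equals `1`, and its unique affine
critical value is `0`. -/
theorem family_generic_one_critical_point (s : ℂ) (hs : s ^ 2 + 1 ≠ 0) :
    (∃! v : Fin 2 → ℂ,
      ∀ i : Fin 2,
        eval v (pderiv i
          ((X 0 - C (s ^ 2 + 1)) * ((X 0) ^ 2 * X 1 + 1) :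
            MvPolynomial (Fin 2) ℂ)) = 0) ∧
    Module.finrank ℂ
        (MvPolynomial (Fin 2) ℂ ⧸
          Ideal.span (Set.range fun i =>
            pderiv i ((X 0 - C (s ^ 2 + 1)) * ((X 0) ^ 2 * X 1 + 1) :
              MvPolynomial (Fin 2) ℂ))) = 1 ∧
    {c : ℂ | ∃ v : Fin 2 → ℂ,
        (∀ i : Fin 2,
          eval v (pderiv i
            ((X 0 - C (s ^ 2 + 1)) * ((X 0) ^ 2 * X 1 + 1) :
              MvPolynomial (Fin 2) ℂ)) = 0) ∧
        eval v ((X 0 - C (s ^ 2 + 1)) * ((X 0) ^ 2 * X 1 + 1) :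
            MvPolynomial (Fin 2) ℂ) = c} = {0} := by
  set a : ℂ := s ^ 2 + 1 with ha
  have ha0 : a ≠ 0 := hs
  have ha2 : (a : ℂ) ^ 2 ≠ 0 := pow_ne_zero 2 ha0
  set f : MvPolynomial (Fin 2) ℂ := (X 0 - C a) * ((X 0) ^ 2 * X 1 + 1) with hf
  have hd0 : pderiv 0 f = ((X 0) ^ 2 * X 1 + 1) + (X 0 - C a) * (2 * X 0 * X 1) := by
    simp [hf, pderiv_mul, pderiv_pow, pderiv_X_self, pderiv_X_of_ne, pderiv_C]
    ring
  have hd1 : pderiv 1 f = (X 0 - C a) * (X 0) ^ 2 := by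
    simp [hf, pderiv_mul, pderiv_pow, pderiv_X_self, pderiv_X_of_ne, pderiv_C]
  set v₀ : Fin 2 → ℂ := ![a, -(a ^ 2)⁻¹] with hv₀
  have hv₀0 : v₀ 0 = a := rfl
  have hv₀1 : v₀ 1 = -(a ^ 2)⁻¹ := rfl
  have heval0 : eval v₀ (pderiv 0 f) = 0 := by
    rw [hd0]
    simp only [eval_add, eval_mul, eval_sub, eval_pow, eval_X, eval_C, map_one,
      hv₀0, hv₀1]
    field_simp
    ring
  have heval1 : eval v₀ (pderiv 1 f) = 0 := by
    rw [hd1]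
    simp [hv₀0]
  have heval : ∀ i : Fin 2, eval v₀ (pderiv i f) = 0 := by
    intro i
    fin_cases i
    · exact heval0
    · exact heval1
  have hfval : eval v₀ f = 0 := by
    rw [hf]
    simp [hv₀0]
  -- uniqueness of the critical point
  have huniq : ∀ v : Fin 2 → ℂ, (∀ i : Fin 2, eval v (pderiv i f) = 0) → v = v₀ := by
    intro v hv
    have h1 := hv 1
    rw [hd1] at h1
    simp only [eval_mul, eval_sub, eval_pow, eval_X, eval_C] at h1
    have h0 := hv 0
    rw [hd0] at h0
    simp only [eval_add, eval_mul, eval_sub, eval_pow, eval_X, eval_C, map_one] at h0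
    rcases mul_eq_zero.1 h1 with h | h
    · have hva : v 0 = a := by linear_combination h
      rw [hva] at h0
      have hvb : v 1 = -(a ^ 2)⁻¹ := by
        field_simp at h0 ⊢
        linear_combination h0
      funext i
      fin_cases i
      · simpa [hv₀0] using hva
      · simpa [hv₀1] using hvb
    · have hv0 : v 0 = 0 := pow_eq_zero_iff (n := 2) (by norm_num) |>.1 h
      rw [hv0] at h0
      simp at h0
  -- the Jacobian ideal equals the maximal ideal at v₀
  have hJ : Ideal.span (Set.range fun i : Fin 2 => pderiv i f)
      = Ideal.span {(X 0 - C a : MvPolynomial (Fin 2) ℂ), C a ^ 2 * X 1 + 1} := by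
    apply le_antisymm
    · rw [Ideal.span_le]
      rintro _ ⟨i, rfl⟩
      have m0 : pderiv 0 f ∈
          Ideal.span {(X 0 - C a : MvPolynomial (Fin 2) ℂ), C a ^ 2 * X 1 + 1} := by
        have hid : pderiv 0 f = (X 1 * (3 * X 0 + C a)) * (X 0 - C a)
            + 1 * (C a ^ 2 * X 1 + 1) := by
          rw [hd0]; ring
        rw [hid]
        exact Ideal.add_mem _
          (Ideal.mul_mem_left _ _ (Ideal.subset_span (by simp)))
          (Ideal.mul_mem_left _ _ (Ideal.subset_span (by simp)))
      have m1 : pderiv 1 f ∈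
          Ideal.span {(X 0 - C a : MvPolynomial (Fin 2) ℂ), C a ^ 2 * X 1 + 1} := by
        have hid : pderiv 1 f = (X 0) ^ 2 * (X 0 - C a) := by
          rw [hd1]; ring
        rw [hid]
        exact Ideal.mul_mem_left _ _ (Ideal.subset_span (by simp))
      fin_cases i
      · exact m0
      · exact m1
    · have hg1 : pderiv 1 f ∈ Ideal.span (Set.range fun i : Fin 2 => pderiv i f) :=
        Ideal.subset_span ⟨1, rfl⟩
      have hg2 : pderiv 0 f ∈ Ideal.span (Set.range fun i : Fin 2 => pderiv i f) :=
        Ideal.subset_span ⟨0, rfl⟩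
      have hp1mem : (X 0 - C a : MvPolynomial (Fin 2) ℂ)
          ∈ Ideal.span (Set.range fun i : Fin 2 => pderiv i f) := by
        have hid : (X 0 - C a : MvPolynomial (Fin 2) ℂ)
            = (X 0 - C a + 2 * C a * (X 0) ^ 2 * X 1
              - 2 * C a ^ 2 * X 0 * X 1) * pderiv 0 f
            + (- (3 * X 1) - 6 * C a * X 0 * X 1 ^ 2 + 4 * C a ^ 2 * X 1 ^ 2)
              * pderiv 1 f := by
          rw [hd0, hd1]; ring
        rw [hid]
        exact Ideal.add_mem _ (Ideal.mul_mem_left _ _ hg2) (Ideal.mul_mem_left _ _ hg1)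
      have hp2mem : (C a ^ 2 * X 1 + 1 : MvPolynomial (Fin 2) ℂ)
          ∈ Ideal.span (Set.range fun i : Fin 2 => pderiv i f) := by
        have hid : (C a ^ 2 * X 1 + 1 : MvPolynomial (Fin 2) ℂ)
            = pderiv 0 f - (X 1 * (3 * X 0 + C a)) * (X 0 - C a) := by
          rw [hd0]; ring
        rw [hid]
        exact Ideal.sub_mem _ hg2 (Ideal.mul_mem_left _ _ hp1mem)
      rw [Ideal.span_le]
      rintro q hq
      rcases hq with h | h
      · rw [h]; exact hp1mem
      · rw [Set.mem_singleton_iff.1 h]; exact hp2mem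
  have hker : Ideal.span {(X 0 - C a : MvPolynomial (Fin 2) ℂ), C a ^ 2 * X 1 + 1}
      = RingHom.ker (aeval v₀ : MvPolynomial (Fin 2) ℂ →ₐ[ℂ] ℂ) := by
    apply le_antisymm
    · rw [Ideal.span_le]
      rintro q hq
      rcases hq with h | h
      · rw [h]
        simp [RingHom.mem_ker, hv₀0]
      · rw [Set.mem_singleton_iff.1 h]
        simp [RingHom.mem_ker, hv₀1]
        field_simp
        ring
    · intro q hq
      rw [RingHom.mem_ker] at hq
      have hq' : eval v₀ q = 0 := by
        rw [← coe_aeval_eq_eval]; exact hq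
      have hmem := sub_C_eval_mem v₀ q
      rw [hq', map_zero, sub_zero] at hmem
      have hle : Ideal.span {X 0 - C (v₀ 0), X 1 - C (v₀ 1)}
          ≤ Ideal.span {(X 0 - C a : MvPolynomial (Fin 2) ℂ), C a ^ 2 * X 1 + 1} := by
        rw [Ideal.span_le]
        rintro r hr
        rcases hr with h | h
        · rw [h, hv₀0]
          exact Ideal.subset_span (by simp)
        · rw [Set.mem_singleton_iff.1 h]
          have hid : (X 1 - C (v₀ 1) : MvPolynomial (Fin 2) ℂ)
              = C ((a ^ 2)⁻¹) * (C a ^ 2 * X 1 + 1) := by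
            rw [hv₀1, mul_add, mul_one, ← mul_assoc, ← C_pow, ← C_mul,
              inv_mul_cancel₀ ha2, C_1, one_mul, map_neg, sub_neg_eq_add]
          rw [hid]
          exact Ideal.mul_mem_left _ _ (Ideal.subset_span (by simp))
      exact hle hmem
  have hsurj : Function.Surjective (aeval v₀ : MvPolynomial (Fin 2) ℂ →ₐ[ℂ] ℂ) :=
    fun c => ⟨C c, by simp⟩
  refine ⟨⟨v₀, heval, huniq⟩, ?_, ?_⟩
  · rw [hJ, hker]
    have e := Ideal.quotientKerAlgEquivOfSurjective hsurj
    rw [e.toLinearEquiv.finrank_eq, Module.finrank_self]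
  · ext c
    simp only [Set.mem_setOf_eq, Set.mem_singleton_iff]
    constructor
    · rintro ⟨v, hv, rfl⟩
      rw [huniq v hv]
      exact hfval
    · rintro rfl
      exact ⟨v₀, heval, hfval⟩
end
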